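/- arXiv:2204.04125 — 4 statements merged into one kernel-verified Lean document; each statement's English description precedes it below -/
import Mathlib

section
/- Let G be a finite simple graph, let u and v be distinct vertices, and suppose there exist m pairwise edge-disjoint paths from u to v, each of length at most L. Let (X_e)_{e ∈ E(G)} be i.i.d. non-negative random variables with common distribution that of X, and define the first passage time T(u,v) as the infimum over all paths Γ from u to v of Σ_{e ∈ Γ} X_e. Then for every ε > 0, P(T(u,v) ≥ ε) ≤ (1 − P(X < ε/L)^L)^m. -/
/-! If every edge of a path of length at most `L` has weight below `ε / L`, the path has
weight below `ε`, so `T(u,v) ≥ ε` forces each of the `m` given paths to carry an edge of weight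
at least `ε / L`. These `m` events depend on disjoint sets of edges, hence are independent, and
each has probability at most `1 - P(X < ε / L)^L`. -/

open MeasureTheory ProbabilityTheory Function
open scoped ENNReal

lemma List.sum_lt_of_forall_lt_div {l : List ℝ} {ε : ℝ} {L : ℕ} (hε : 0 < ε)
    (hl : l.length ≤ L) (h : ∀ x ∈ l, x < ε / L) : l.sum < ε := by
  rcases eq_or_ne l [] with rfl | hne
  · simpa using hε
  have hL : (0 : ℝ) < L := by
    exact_mod_cast (List.length_pos_of_ne_nil hne).trans_le hl
  calc l.sum = (l.map id).sum := by rw [List.map_id]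
    _ < (l.map fun _ => ε / L).sum := List.sum_lt_sum_of_ne_nil hne _ _ h
    _ = l.length * (ε / L) := by simp
    _ ≤ L * (ε / L) := by gcongr
    _ = ε := by field_simp

namespace ProbabilityTheory

variable {Ω ι κ : Type*} {mΩ : MeasurableSpace Ω} {μ : Measure Ω}

lemma iIndepFun.iIndepSet_preimage {β : ι → Type*} {mβ : ∀ i, MeasurableSpace (β i)}
    {f : ∀ i, Ω → β i} (hf : iIndepFun f μ) (hfm : ∀ i, Measurable (f i))
    {s : ∀ i, Set (β i)} (hs : ∀ i, MeasurableSet (s i)) :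
    iIndepSet (fun i => f i ⁻¹' s i) μ :=
  (iIndepSet_iff_meas_biInter fun i => hfm i (hs i)).2 fun _ =>
    hf.meas_biInter fun i _ => ⟨s i, hs i, rfl⟩

lemma iIndepSet.biInter_of_pairwiseDisjoint {B : ι → Set Ω} (hB : iIndepSet B μ)
    (hBm : ∀ i, MeasurableSet (B i)) {F : κ → Finset ι} (hF : Pairwise (Disjoint on F)) :
    iIndepSet (fun k => ⋂ i ∈ F k, B i) μ := by
  classical
  refine (iIndepSet_iff_meas_biInter fun k => (F k).measurableSet_biInter fun i _ => hBm i).2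
    fun s => ?_
  rw [← Finset.set_biInter_biUnion, hB.meas_biInter,
    Finset.prod_biUnion fun k _ l _ hkl => hF hkl]
  exact Finset.prod_congr rfl fun k _ => (hB.meas_biInter (F k)).symm

lemma iIndepSet.measure_iInter_compl [Fintype κ] {A : κ → Set Ω} (hA : iIndepSet A μ)
    (hAm : ∀ k, MeasurableSet (A k)) :
    μ (⋂ k, (A k)ᶜ) = ∏ k, (1 - μ (A k)) := by
  have := hA.isProbabilityMeasure
  rw [((iIndepSet_iff_iIndep A μ).1 hA).meas_iInter fun k =>
    (MeasurableSpace.measurableSet_generateFrom (Set.mem_singleton _)).compl]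
  exact Finset.prod_congr rfl fun k _ => prob_compl_eq_one_sub (hAm k)

lemma measure_iInter_compl_biInter_le [Fintype κ] {B : ι → Set Ω} (hB : iIndepSet B μ)
    (hBm : ∀ i, MeasurableSet (B i)) {p : ℝ≥0∞} (hp : ∀ i, p ≤ μ (B i)) (hp1 : p ≤ 1)
    {F : κ → Finset ι} (hF : Pairwise (Disjoint on F)) {L : ℕ}
    (hL : ∀ k, (F k).card ≤ L) :
    μ (⋂ k, (⋂ i ∈ F k, B i)ᶜ) ≤ (1 - p ^ L) ^ Fintype.card κ := by
  rw [(hB.biInter_of_pairwiseDisjoint hBm hF).measure_iInter_compl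
    fun k => (F k).measurableSet_biInter fun i _ => hBm i, ← Finset.card_univ,
    ← Finset.prod_const]
  refine Finset.prod_le_prod' fun k _ => tsub_le_tsub_left ?_ 1
  calc p ^ L ≤ p ^ (F k).card := pow_le_pow_right_of_le_one' hp1 (hL k)
    _ = ∏ i ∈ F k, p := (Finset.prod_const p).symm
    _ ≤ μ (⋂ i ∈ F k, B i) := hB.meas_biInter (F k) ▸ Finset.prod_le_prod' fun i _ => hp i

end ProbabilityTheory

lemma SimpleGraph.Walk.exists_mem_edges_div_le {V : Type*} {G : SimpleGraph V} {u v : V}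
    {w : Sym2 V → ℝ} (hw : ∀ e, 0 ≤ w e) {ε : ℝ} (hε : 0 < ε) {L : ℕ}
    (hT : ε ≤ ⨅ Γ : {p : G.Walk u v // p.IsPath}, ((Γ : G.Walk u v).edges.map w).sum)
    {p : G.Walk u v} (hp : p.IsPath) (hlen : p.length ≤ L) :
    ∃ e ∈ p.edges, ε / L ≤ w e := by
  by_contra! h
  have hbdd : BddBelow (Set.range fun Γ : {p : G.Walk u v // p.IsPath} =>
      ((Γ : G.Walk u v).edges.map w).sum) := ⟨0, by
    rintro _ ⟨Γ, rfl⟩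
    exact List.sum_nonneg fun x hx => by
      obtain ⟨e, -, rfl⟩ := List.mem_map.1 hx
      exact hw e⟩
  have hlt : (p.edges.map w).sum < ε :=
    List.sum_lt_of_forall_lt_div hε (by simpa using hlen) (by simpa using h)
  exact hT.not_gt ((ciInf_le hbdd (⟨p, hp⟩ : {p : G.Walk u v // p.IsPath})).trans_lt hlt)

lemma SimpleGraph.Walk.card_subtype_edges_le {V : Type*} [DecidableEq V] {G : SimpleGraph V}
    {u v : V} (p : G.Walk u v) [DecidablePred (· ∈ G.edgeSet)] :
    (p.edges.toFinset.subtype (· ∈ G.edgeSet)).card ≤ p.length :=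
  calc _ ≤ p.edges.toFinset.card := (Finset.card_subtype _ _).trans_le (Finset.card_filter_le _ _)
    _ ≤ p.length := (List.toFinset_card_le _).trans_eq p.length_edges

theorem stmt2_general
    {Ω : Type*} [MeasureSpace Ω] [IsProbabilityMeasure (ℙ : Measure Ω)]
    {V : Type*} (G : SimpleGraph V) (u v : V)
    (m L : ℕ)
    (P : Fin m → G.Walk u v)
    (hPpath : ∀ i, (P i).IsPath)
    (hPlen : ∀ i, (P i).length ≤ L)
    (hPdisj : ∀ i j, i ≠ j → ∀ e, e ∈ (P i).edges → e ∉ (P j).edges)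
    (X : Sym2 V → Ω → ℝ) (hXmeas : ∀ e, Measurable (X e))
    (hXnonneg : ∀ e ω, 0 ≤ X e ω)
    (X₀ : Ω → ℝ)
    (hindep : iIndepFun (fun e : G.edgeSet => X e) ℙ)
    (hident : ∀ e ∈ G.edgeSet, IdentDistrib (X e) X₀ ℙ ℙ)
    (T : Ω → ℝ)
    (hT : ∀ ω, T ω = ⨅ Γ : {p : G.Walk u v // p.IsPath},
        ((Γ : G.Walk u v).edges.map (fun e => X e ω)).sum) :
    ∀ ε > (0 : ℝ),
      ℙ {ω | ε ≤ T ω} ≤ (1 - ℙ {ω | X₀ ω < ε / L} ^ L) ^ m := by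
  classical
  intro ε hε
  let B : G.edgeSet → Set Ω := fun e => X e ⁻¹' Set.Iio (ε / L)
  let F : Fin m → Finset G.edgeSet := fun i =>
    (P i).edges.toFinset.subtype (· ∈ G.edgeSet)
  have hmemF : ∀ i (e : G.edgeSet), e ∈ F i ↔ (e : Sym2 V) ∈ (P i).edges := by simp [F]
  have hF : Pairwise (Disjoint on F) := fun i j hij => Finset.disjoint_left.2 fun e hi hj =>
    hPdisj i j hij e ((hmemF i e).1 hi) ((hmemF j e).1 hj)
  have hcard : ∀ i, (F i).card ≤ L := fun i => ((P i).card_subtype_edges_le).trans (hPlen i)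
  have hsub : {ω | ε ≤ T ω} ⊆ ⋂ i, (⋂ e ∈ F i, B e)ᶜ := by
    intro ω hω
    simp only [Set.mem_iInter, Set.mem_compl_iff]
    intro i hAi
    obtain ⟨e, he, hge⟩ := SimpleGraph.Walk.exists_mem_edges_div_le (hXnonneg · ω) hε
      (hT ω ▸ hω) (hPpath i) (hPlen i)
    exact (hAi ⟨e, (P i).edges_subset_edgeSet he⟩ ((hmemF i _).2 he)).not_ge hge
  calc ℙ {ω | ε ≤ T ω} ≤ ℙ (⋂ i, (⋂ e ∈ F i, B e)ᶜ) := measure_mono hsub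
    _ ≤ (1 - ℙ {ω | X₀ ω < ε / L} ^ L) ^ Fintype.card (Fin m) :=
      measure_iInter_compl_biInter_le
        (hindep.iIndepSet_preimage (fun e => hXmeas e) fun _ => measurableSet_Iio)
        (fun e => hXmeas e measurableSet_Iio)
        (fun e => ((hident e e.2).measure_mem_eq measurableSet_Iio).ge) prob_le_one hF hcard
    _ = _ := by rw [Fintype.card_fin]

/-- In a finite simple graph with `m` pairwise edge-disjoint paths between
distinct vertices `u ≠ v`, each of length at most `L`, and i.i.d. nonnegative edge weights
with common distribution that of `X₀`, the first passage time
`T(u,v) = inf_Γ Σ_{e ∈ Γ} X e` satisfies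
`P(T(u,v) ≥ ε) ≤ (1 − P(X₀ < ε/L)^L)^m` for every `ε > 0`. -/
theorem stmt2
    {Ω : Type*} [MeasureSpace Ω] [IsProbabilityMeasure (ℙ : Measure Ω)]
    {V : Type*} [Fintype V] (G : SimpleGraph V) (u v : V) (huv : u ≠ v)
    (m L : ℕ)
    (P : Fin m → G.Walk u v)
    (hPpath : ∀ i, (P i).IsPath)
    (hPlen : ∀ i, (P i).length ≤ L)
    (hPdisj : ∀ i j, i ≠ j → ∀ e, e ∈ (P i).edges → e ∉ (P j).edges)
    (X : Sym2 V → Ω → ℝ) (hXmeas : ∀ e, Measurable (X e))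
    (hXnonneg : ∀ e ω, 0 ≤ X e ω)
    (X₀ : Ω → ℝ)
    (hindep : iIndepFun (fun e : G.edgeSet => X e) ℙ)
    (hident : ∀ e ∈ G.edgeSet, IdentDistrib (X e) X₀ ℙ ℙ)
    (T : Ω → ℝ)
    (hT : ∀ ω, T ω = ⨅ Γ : {p : G.Walk u v // p.IsPath},
        ((Γ : G.Walk u v).edges.map (fun e => X e ω)).sum) :
    ∀ ε > (0 : ℝ),
      ℙ {ω | ε ≤ T ω} ≤ (1 - ℙ {ω | X₀ ω < ε / L} ^ L) ^ m :=
  stmt2_general G u v m L P hPpath hPlen hPdisj X hXmeas hXnonneg X₀ hindep hident T hT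
end

section
/- Let D satisfy the power-law assumption with exponent τ ∈ (1,2) and slowly varying function ℓ, and fix 0 < α < 1/(τ−1). Let (D_i(n))_{i=1}^n be i.i.d. copies of D(n), the variable D conditioned to be at most n^α, and set M_n = Σ_{i=1}^n D_i(n). Then M_n / E[M_n] → 1 in probability as n → ∞. -/
/-!
Write `K = n^α` and `T x = P(D > x)`. Every summand lies in `[0, K]`, so `Var M_n ≤ K E[M_n]`
and Chebyshev bounds the deviation probability by `K / (ε² E[M_n])`. Conditioning on `D ≤ K` only
increases point masses, so each summand exceeds `K/2` with probability at least
`T(K/2) - T(K)`, whence `E[M_n] ≥ (K/2) n (T(K/2) - T(K))` and the bound is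
`2 / (ε² n (T(K/2) - T(K)))`. By regular variation `T(K/2) - T(K) ~ (2^(τ-1) - 1) T(K)`, and
`n T(n^α) → ∞` because `α (τ - 1) < 1`: the function `x^(1/α) T(x)` grows geometrically along
`x₀ 2^k`, and the monotonicity of `T` interpolates between these points.
-/

open MeasureTheory ProbabilityTheory Filter

/-- A function `ℓ : ℝ → ℝ` is slowly varying if it is eventually positive and for every
`c > 0`, `ℓ(cx)/ℓ(x) → 1` as `x → ∞`. -/
def SlowlyVarying (ℓ : ℝ → ℝ) : Prop :=
  (∀ᶠ x in atTop, 0 < ℓ x) ∧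
    ∀ c > (0 : ℝ), Tendsto (fun x => ℓ (c * x) / ℓ x) atTop (nhds 1)

open Topology

namespace SlowlyVarying

variable {ℓ T : ℝ → ℝ} {β : ℝ}

theorem eventually_pos_of_eq_mul_rpow (hℓ : SlowlyVarying ℓ)
    (hT : ∀ x ≥ 1, T x = ℓ x * x ^ (-β)) : ∀ᶠ x in atTop, 0 < T x := by
  filter_upwards [hℓ.1, eventually_ge_atTop 1] with x hℓx hx
  rw [hT x hx]
  exact mul_pos hℓx (Real.rpow_pos_of_pos (by linarith) _)

theorem tendsto_div_of_eq_mul_rpow (hℓ : SlowlyVarying ℓ) (hT : ∀ x ≥ 1, T x = ℓ x * x ^ (-β))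
    {c : ℝ} (hc : 0 < c) :
    Tendsto (fun x => T (c * x) / T x) atTop (𝓝 (c ^ (-β))) := by
  rw [← one_mul (c ^ (-β))]
  refine ((hℓ.2 c hc).mul_const _).congr' ?_
  filter_upwards [hℓ.1, eventually_ge_atTop 1, eventually_ge_atTop c⁻¹] with x hℓx hx hcx
  have hx0 : 0 < x := by linarith
  rw [hT x hx, hT (c * x) (by rwa [ge_iff_le, ← inv_mul_le_iff₀ hc, mul_one]),
    Real.mul_rpow hc.le hx0.le]
  field_simp [(Real.rpow_pos_of_pos hx0 (-β)).ne']

end SlowlyVarying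

theorem tendsto_rpow_mul_atTop_of_tendsto_two_pow {T : ℝ → ℝ} {s x0 : ℝ} (hT : Antitone T)
    (hs : 0 ≤ s) (hx0 : 0 < x0) (hT0 : ∀ x ≥ x0, 0 ≤ T x)
    (hgeom : Tendsto (fun k : ℕ => (2 ^ k * x0) ^ s * T (2 ^ k * x0)) atTop atTop) :
    Tendsto (fun x => x ^ s * T x) atTop atTop := by
  rw [tendsto_atTop]
  intro b
  obtain ⟨N, hN⟩ := (hgeom.eventually_ge_atTop (2 ^ s * b)).exists_forall_of_atTop
  filter_upwards [eventually_ge_atTop (2 ^ N * x0)] with x hx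
  obtain ⟨k, hkx, hxk⟩ := exists_nat_pow_near ((one_le_div hx0).2
    ((le_mul_of_one_le_left hx0.le (one_le_pow₀ one_le_two)).trans hx)) one_lt_two
  rw [le_div_iff₀ hx0] at hkx
  rw [div_lt_iff₀ hx0] at hxk
  have hNk : N ≤ k + 1 := by
    have : (2 : ℝ) ^ N < 2 ^ (k + 1) := by nlinarith
    exact ((pow_lt_pow_iff_right₀ one_lt_two).1 this).le
  set y := 2 ^ k * x0
  have hy : 0 < y := by positivity
  have hx0y : x0 ≤ y := le_mul_of_one_le_left hx0.le (one_le_pow₀ one_le_two)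
  have hb : b ≤ y ^ s * T (2 * y) := by
    rw [← mul_le_mul_iff_right₀ (Real.rpow_pos_of_pos two_pos s), ← mul_assoc,
      ← Real.mul_rpow two_pos.le hy.le]
    simpa only [y, pow_succ', mul_assoc] using hN _ hNk
  have hx2y : x ≤ 2 * y := by rw [pow_succ'] at hxk; linarith
  exact hb.trans (mul_le_mul (Real.rpow_le_rpow hy.le hkx hs) (hT hx2y) (hT0 _ (by linarith))
    (Real.rpow_nonneg (hy.le.trans hkx) _))

-- Monotonicity of `T` stands in for the uniform convergence theorem for slowly varying
-- functions, which would require `ℓ` to be measurable.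
theorem tendsto_rpow_mul_atTop_of_antitone {T : ℝ → ℝ} {β s : ℝ} (hT : Antitone T)
    (hpos : ∀ᶠ x in atTop, 0 < T x)
    (hratio : Tendsto (fun x => T (2 * x) / T x) atTop (𝓝 (2 ^ (-β)))) (hβs : β < s) :
    Tendsto (fun x => x ^ s * T x) atTop atTop := by
  set g : ℝ → ℝ := fun x => x ^ s * T x
  have hβ : 0 ≤ β := by
    have : (2 : ℝ) ^ (-β) ≤ 1 := le_of_tendsto hratio <| by
      filter_upwards [hpos, eventually_ge_atTop 0] with x hTx hx
      exact div_le_one_of_le₀ (hT (by linarith)) hTx.le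
    by_contra! hneg
    exact this.not_gt (Real.one_lt_rpow one_lt_two (by linarith))
  have hgratio : Tendsto (fun x => g (2 * x) / g x) atTop (𝓝 (2 ^ (s - β))) := by
    rw [Real.rpow_sub two_pos, div_eq_mul_inv, ← Real.rpow_neg two_pos.le]
    refine (hratio.const_mul _).congr' ?_
    filter_upwards [hpos, eventually_gt_atTop 0] with x hTx hx
    simp only [g, Real.mul_rpow two_pos.le hx.le]
    field_simp [(Real.rpow_pos_of_pos hx s).ne']
  obtain ⟨q, hq1, hq⟩ := exists_between (Real.one_lt_rpow one_lt_two (sub_pos.2 hβs))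
  obtain ⟨x0, hx0⟩ := (((hgratio.eventually (eventually_gt_nhds hq)).and hpos).and
    (eventually_gt_atTop 0)).exists_forall_of_atTop
  have hx0pos : 0 < x0 := (hx0 x0 le_rfl).2
  have hle : ∀ k : ℕ, x0 ≤ 2 ^ k * x0 := fun k =>
    le_mul_of_one_le_left hx0pos.le (one_le_pow₀ one_le_two)
  refine tendsto_rpow_mul_atTop_of_tendsto_two_pow hT (by linarith) hx0pos
    (fun x hx => (hx0 x hx).1.2.le) (tendsto_atTop_of_geom_le ?_ hq1 fun k => ?_)
  · simpa using mul_pos (Real.rpow_pos_of_pos hx0pos s) (hx0 x0 le_rfl).1.2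
  · obtain ⟨⟨hgk, hTk⟩, -⟩ := hx0 _ (hle k)
    rw [pow_succ', mul_assoc]
    exact ((lt_div_iff₀ (by positivity)).1 hgk).le

theorem SlowlyVarying.tendsto_mul_sub_rpow_half {ℓ T : ℝ → ℝ} {α β : ℝ} (hℓ : SlowlyVarying ℓ)
    (hT : Antitone T) (hTℓ : ∀ x ≥ 1, T x = ℓ x * x ^ (-β)) (hα : 0 < α) (hβ : 0 < β)
    (hαβ : α * β < 1) :
    Tendsto (fun x => x * (T (x ^ α / 2) - T (x ^ α))) atTop atTop := by
  have hK := tendsto_rpow_atTop hα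
  have hpos := hℓ.eventually_pos_of_eq_mul_rpow hTℓ
  have hβα : β < α⁻¹ := by rw [← one_div, lt_div_iff₀ hα]; linarith
  have hgrow : Tendsto (fun x => x * T (x ^ α)) atTop atTop := by
    refine ((tendsto_rpow_mul_atTop_of_antitone hT hpos
      (hℓ.tendsto_div_of_eq_mul_rpow hTℓ two_pos) hβα).comp hK).congr' ?_
    filter_upwards [eventually_ge_atTop 0] with x hx
    simp only [Function.comp_apply, Real.rpow_rpow_inv hx hα.ne']
  have hhalf : Tendsto (fun x => T (x ^ α / 2) / T (x ^ α) - 1) atTop (𝓝 (2 ^ β - 1)) := by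
    have h := (hℓ.tendsto_div_of_eq_mul_rpow hTℓ (c := 2⁻¹) (by norm_num)).comp hK
    rw [Real.inv_rpow two_pos.le, ← Real.rpow_neg two_pos.le, neg_neg] at h
    simpa only [Function.comp_def, inv_mul_eq_div] using h.sub_const 1
  refine (hgrow.atTop_mul_pos (sub_pos.2 (Real.one_lt_rpow one_lt_two hβ)) hhalf).congr' ?_
  filter_upwards [hK.eventually hpos] with x hx
  field_simp

section Probability

open Finset

variable {Ω : Type*} [MeasurableSpace Ω] {μ : Measure Ω}

theorem ae_mem_of_forall_notMem_measure_preimage_singleton {Y : Ω → ℕ} {S : Set ℕ}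
    (h : ∀ j ∉ S, μ (Y ⁻¹' {j}) = 0) : ∀ᵐ ω ∂μ, Y ω ∈ S := by
  rw [ae_iff]
  change μ (Y ⁻¹' Sᶜ) = 0
  rw [← Set.biUnion_preimage_singleton, measure_biUnion_null_iff Sᶜ.to_countable]
  exact h

theorem measure_preimage_le_of_forall_mem_singleton {Y Z : Ω → ℕ} (hY : Measurable Y)
    (hZ : Measurable Z) {S : Set ℕ} (h : ∀ j ∈ S, μ (Y ⁻¹' {j}) ≤ μ (Z ⁻¹' {j})) :
    μ (Y ⁻¹' S) ≤ μ (Z ⁻¹' S) := by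
  rw [← tsum_measure_preimage_singleton S.to_countable fun j _ => hY (measurableSet_singleton j),
    ← tsum_measure_preimage_singleton S.to_countable fun j _ => hZ (measurableSet_singleton j)]
  exact ENNReal.tsum_le_tsum fun j => h j j.2

theorem ae_le_of_conditioned {D Y : Ω → ℕ} {K : ℝ} (hY : ∀ j : ℕ, μ {ω | Y ω = j} =
      if 1 ≤ j ∧ (j : ℝ) ≤ K then μ {ω | D ω = j} / μ {ω | (D ω : ℝ) ≤ K} else 0) :
    ∀ᵐ ω ∂μ, (Y ω : ℝ) ≤ K :=
  ae_mem_of_forall_notMem_measure_preimage_singleton (S := {j | (j : ℝ) ≤ K}) fun j hj => by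
    change μ {ω | Y ω = j} = 0
    rw [hY, if_neg fun h => hj h.2]

theorem meas_ge_abs_div_integral_sub_one_le [IsFiniteMeasure μ] {Y : Ω → ℝ} (hY : MemLp Y 2 μ)
    {ε : ℝ} (hε : 0 < ε) (hm : 0 < μ[Y]) :
    μ {ω | ε ≤ |Y ω / μ[Y] - 1|} ≤ ENNReal.ofReal (variance Y μ / (ε * μ[Y]) ^ 2) := by
  convert meas_ge_le_variance_div_sq hY (mul_pos hε hm) using 3
  ext ω
  rw [← le_div_iff₀ hm, div_sub_one hm.ne', abs_div, abs_of_pos hm]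

variable [IsProbabilityMeasure μ]

theorem measureReal_sub_le_of_conditioned {D Y : Ω → ℕ} {K b : ℝ} (hD : Measurable D)
    (hYmeas : Measurable Y) (hY : ∀ j : ℕ, μ {ω | Y ω = j} =
      if 1 ≤ j ∧ (j : ℝ) ≤ K then μ {ω | D ω = j} / μ {ω | (D ω : ℝ) ≤ K} else 0)
    (hb : 0 ≤ b) (hbK : b ≤ K) :
    μ.real {ω | b < (D ω : ℝ)} - μ.real {ω | K < (D ω : ℝ)} ≤ μ.real {ω | b ≤ (Y ω : ℝ)} := by
  set A : Set ℕ := {j | b < j ∧ (j : ℝ) ≤ K}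
  have hdiff : {ω | b < (D ω : ℝ)} \ {ω | K < (D ω : ℝ)} = D ⁻¹' A := by ext; simp [A]
  rw [← measureReal_sdiff (s₁ := {ω | b < (D ω : ℝ)}) (s₂ := {ω | K < (D ω : ℝ)})
    (fun ω h => hbK.trans_lt h) (measurableSet_lt measurable_const (by fun_prop)), hdiff]
  refine ENNReal.toReal_mono (measure_ne_top _ _) ((measure_preimage_le_of_forall_mem_singleton
    hD hYmeas fun j hj => ?_).trans (measure_mono fun ω h => h.1.le))
  change μ {ω | D ω = j} ≤ μ {ω | Y ω = j}
  rw [hY, if_pos ⟨Nat.cast_pos.1 (hb.trans_lt hj.1), hj.2⟩]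
  exact (div_one (μ {ω | D ω = j})).symm.le.trans (ENNReal.div_le_div_left prob_le_one _)

theorem variance_le_mul_integral_of_ae_bound {X : Ω → ℝ} {K : ℝ}
    (hX : AEStronglyMeasurable X μ) (h : ∀ᵐ ω ∂μ, 0 ≤ X ω ∧ X ω ≤ K) :
    variance X μ ≤ K * μ[X] := by
  have hL : MemLp X 2 μ := MemLp.of_bound hX K <| by
    filter_upwards [h] with ω hω
    rw [Real.norm_eq_abs, abs_of_nonneg hω.1]
    exact hω.2
  refine (variance_le_expectation_sq hX).trans ?_
  rw [← integral_const_mul]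
  refine integral_mono_ae hL.integrable_sq ((hL.integrable one_le_two).const_mul K) ?_
  filter_upwards [h] with ω hω
  simp only [Pi.pow_apply]
  nlinarith

theorem meas_ge_abs_sum_div_integral_sub_one_le {ι : Type*} {X : ι → Ω → ℝ} {s : Finset ι}
    {K b a ε : ℝ} (hX : ∀ i ∈ s, AEStronglyMeasurable (X i) μ)
    (hbdd : ∀ i ∈ s, ∀ᵐ ω ∂μ, 0 ≤ X i ω ∧ X i ω ≤ K)
    (hindep : (s : Set ι).Pairwise fun i j => IndepFun (X i) (X j) μ)
    (hlow : ∀ i ∈ s, a ≤ μ.real {ω | b ≤ X i ω}) (hs : s.Nonempty) (hb : 0 < b) (ha : 0 < a)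
    (hε : 0 < ε) :
    μ {ω | ε ≤ |(∑ i ∈ s, X i ω) / (∫ ω', ∑ i ∈ s, X i ω' ∂μ) - 1|}
      ≤ ENNReal.ofReal (K / (ε ^ 2 * (b * (#s * a)))) := by
  have hL : ∀ i ∈ s, MemLp (X i) 2 μ := fun i hi => MemLp.of_bound (hX i hi) K <| by
    filter_upwards [hbdd i hi] with ω hω
    rw [Real.norm_eq_abs, abs_of_nonneg hω.1]
    exact hω.2
  have hint : ∀ i ∈ s, Integrable (X i) μ := fun i hi => (hL i hi).integrable one_le_two
  set m := ∫ ω, ∑ i ∈ s, X i ω ∂μ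
  have hm_eq : m = ∑ i ∈ s, μ[X i] := integral_finsetSum s hint
  have hm : b * (#s * a) ≤ m :=
    calc b * (#s * a) = ∑ i ∈ s, b * a := by rw [sum_const, nsmul_eq_mul]; ring
      _ ≤ m := hm_eq ▸ sum_le_sum fun i hi =>
        (mul_le_mul_of_nonneg_left (hlow i hi) hb.le).trans
          (mul_meas_ge_le_integral_of_nonneg ((hbdd i hi).mono fun ω hω => hω.1) (hint i hi) b)
  have hsum : (fun ω => ∑ i ∈ s, X i ω) = ∑ i ∈ s, X i := by ext; simp
  have hm0 : 0 < m := lt_of_lt_of_le (by have := hs.card_pos; positivity) hm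
  have hvar : variance (fun ω => ∑ i ∈ s, X i ω) μ ≤ K * m := by
    rw [hsum, IndepFun.variance_sum hL hindep, hm_eq, mul_sum]
    exact sum_le_sum fun i hi => variance_le_mul_integral_of_ae_bound (hX i hi) (hbdd i hi)
  have hK : 0 ≤ K := nonneg_of_mul_nonneg_left ((variance_nonneg _ _).trans hvar) hm0
  refine (meas_ge_abs_div_integral_sub_one_le (hsum ▸ memLp_finsetSum' s hL) hε hm0).trans
    (ENNReal.ofReal_le_ofReal ?_)
  calc variance (fun ω => ∑ i ∈ s, X i ω) μ / (ε * m) ^ 2 ≤ K * m / (ε * m) ^ 2 := by gcongr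
    _ = K / (ε ^ 2 * m) := by field_simp
    _ ≤ K / (ε ^ 2 * (b * (#s * a))) := by gcongr

theorem meas_ge_abs_sum_div_integral_sub_one_le_of_conditioned {D : Ω → ℕ} (hD : Measurable D)
    {n : ℕ} (hn : 0 < n) {K ε : ℝ} (hK : 0 < K) (hε : 0 < ε) {Y : ℕ → Ω → ℕ}
    (hYmeas : ∀ i, Measurable (Y i)) (hYindep : iIndepFun (fun i : Fin n => Y i) μ)
    (hY : ∀ i < n, ∀ j : ℕ, μ {ω | Y i ω = j} =
      if 1 ≤ j ∧ (j : ℝ) ≤ K then μ {ω | D ω = j} / μ {ω | (D ω : ℝ) ≤ K} else 0)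
    (hδ : 0 < μ.real {ω | K / 2 < (D ω : ℝ)} - μ.real {ω | K < (D ω : ℝ)}) :
    μ {ω | ε ≤ |(∑ i ∈ range n, (Y i ω : ℝ)) / (∫ ω', ∑ i ∈ range n, (Y i ω' : ℝ) ∂μ) - 1|}
      ≤ ENNReal.ofReal (2 / (ε ^ 2 * (n * (μ.real {ω | K / 2 < (D ω : ℝ)}
        - μ.real {ω | K < (D ω : ℝ)})))) := by
  have hindep : ((range n : Finset ℕ) : Set ℕ).Pairwise
      fun i j => IndepFun (fun ω => (Y i ω : ℝ)) (fun ω => (Y j ω : ℝ)) μ := by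
    intro i hi j hj hij
    exact (hYindep.indepFun (i := ⟨i, mem_range.1 hi⟩) (j := ⟨j, mem_range.1 hj⟩)
      (by simpa using hij)).comp measurable_from_top measurable_from_top
  have h := meas_ge_abs_sum_div_integral_sub_one_le (X := fun i ω => (Y i ω : ℝ))
    (s := range n) (b := K / 2) (ε := ε)
    (fun i _ => (measurable_from_top.comp (hYmeas i)).aestronglyMeasurable)
    (fun i hi => (ae_le_of_conditioned (hY i (mem_range.1 hi))).mono fun ω hω =>
      ⟨Nat.cast_nonneg _, hω⟩) hindep
    (fun i hi => measureReal_sub_le_of_conditioned hD (hYmeas i) (hY i (mem_range.1 hi))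
      (by positivity) (by linarith))
    (nonempty_range_iff.2 hn.ne') (by positivity) hδ hε
  rw [card_range] at h
  convert h using 2
  field_simp

end Probability

theorem stmt6_general
    {Ω : Type*} [MeasureSpace Ω] [IsProbabilityMeasure (ℙ : Measure Ω)]
    (D : Ω → ℕ) (hDmeas : Measurable D)
    (τ : ℝ) (hτ : τ ∈ Set.Ioo (1 : ℝ) 2)
    (ℓ : ℝ → ℝ) (hℓ : SlowlyVarying ℓ)
    (hpow : ∀ x ≥ (1 : ℝ), (ℙ {ω | x < (D ω : ℝ)}).toReal = ℓ x * x ^ (-(τ - 1)))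
    (α : ℝ) (hα : 0 < α) (hα' : α < 1 / (τ - 1))
    (D' : ℕ → ℕ → Ω → ℕ) (hD'meas : ∀ n i, Measurable (D' n i))
    (hD'indep : ∀ n, iIndepFun (fun i : Fin n => D' n i) ℙ)
    (hD'dist : ∀ n, ∀ i < n, ∀ j : ℕ,
      ℙ {ω | D' n i ω = j}
        = if 1 ≤ j ∧ (j : ℝ) ≤ (n : ℝ) ^ α then
            ℙ {ω | D ω = j} / ℙ {ω | (D ω : ℝ) ≤ (n : ℝ) ^ α}
          else 0) :
    ∀ ε > (0 : ℝ),
      Tendsto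
        (fun n : ℕ =>
          ℙ {ω | ε ≤ |(∑ i ∈ Finset.range n, (D' n i ω : ℝ)) /
              (∫ ω', ∑ i ∈ Finset.range n, (D' n i ω' : ℝ)) - 1|})
        atTop (nhds 0) := by
  intro ε hε
  set T : ℝ → ℝ := fun x => (ℙ {ω | x < (D ω : ℝ)}).toReal
  have hT : Antitone T := fun x y hxy =>
    ENNReal.toReal_mono (measure_ne_top _ _) (measure_mono fun ω h => hxy.trans_lt h)
  have hβ : 0 < τ - 1 := sub_pos.2 hτ.1
  have hgrow : Tendsto (fun n : ℕ => (n : ℝ) * (T ((n : ℝ) ^ α / 2) - T ((n : ℝ) ^ α)))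
      atTop atTop :=
    (hℓ.tendsto_mul_sub_rpow_half hT hpow hα hβ ((lt_div_iff₀ hβ).1 hα')).comp
      tendsto_natCast_atTop_atTop
  refine tendsto_of_tendsto_of_tendsto_of_le_of_le' tendsto_const_nhds
    (ENNReal.ofReal_zero ▸ ENNReal.tendsto_ofReal
      ((tendsto_const_nhds (x := (2 : ℝ))).div_atTop (hgrow.const_mul_atTop (pow_pos hε 2))))
    (Eventually.of_forall fun _ => zero_le) ?_
  filter_upwards [hgrow.eventually_gt_atTop 0, eventually_gt_atTop 0] with n hδ hn
  exact meas_ge_abs_sum_div_integral_sub_one_le_of_conditioned hDmeas hn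
    (Real.rpow_pos_of_pos (Nat.cast_pos.2 hn) α) hε (hD'meas n) (hD'indep n) (hD'dist n)
    (pos_of_mul_pos_right hδ (Nat.cast_nonneg n))

/-- With `D` power-law with exponent `τ ∈ (1,2)` and slowly varying `ℓ`,
`0 < α < 1/(τ-1)`, and `D' n i` (for `i < n`) i.i.d. copies of `D` conditioned to be at most
`n^α`, the total degree `M_n = Σ_{i<n} D' n i` satisfies `M_n / E[M_n] → 1` in probability. -/
theorem stmt6
    {Ω : Type*} [MeasureSpace Ω] [IsProbabilityMeasure (ℙ : Measure Ω)]
    (D : Ω → ℕ) (hDmeas : Measurable D) (hDpos : ∀ ω, 1 ≤ D ω)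
    (τ : ℝ) (hτ : τ ∈ Set.Ioo (1 : ℝ) 2)
    (ℓ : ℝ → ℝ) (hℓ : SlowlyVarying ℓ)
    (hpow : ∀ x ≥ (1 : ℝ), (ℙ {ω | x < (D ω : ℝ)}).toReal = ℓ x * x ^ (-(τ - 1)))
    (α : ℝ) (hα : 0 < α) (hα' : α < 1 / (τ - 1))
    (D' : ℕ → ℕ → Ω → ℕ) (hD'meas : ∀ n i, Measurable (D' n i))
    (hD'indep : ∀ n, iIndepFun (fun i : Fin n => D' n i) ℙ)
    (hD'dist : ∀ n, ∀ i < n, ∀ j : ℕ,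
      ℙ {ω | D' n i ω = j}
        = if 1 ≤ j ∧ (j : ℝ) ≤ (n : ℝ) ^ α then
            ℙ {ω | D ω = j} / ℙ {ω | (D ω : ℝ) ≤ (n : ℝ) ^ α}
          else 0) :
    ∀ ε > (0 : ℝ),
      Tendsto
        (fun n : ℕ =>
          ℙ {ω | ε ≤ |(∑ i ∈ Finset.range n, (D' n i ω : ℝ)) /
              (∫ ω', ∑ i ∈ Finset.range n, (D' n i ω' : ℝ)) - 1|})
        atTop (nhds 0) :=
  stmt6_general D hDmeas τ hτ ℓ hℓ hpow α hα hα' D' hD'meas hD'indep hD'dist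
end

section
/- Let D satisfy the power-law assumption with exponent τ ∈ (1,2) and slowly varying function ℓ, let (D_i)_{i≥1} be i.i.d. copies of D, and let (u_n) be a sequence of positive reals with n(1 − F(u_n)) → 1 as n → ∞. Let (ε_n) be any sequence of positive reals with ε_n → 0. Setting L_n = Σ_{i=1}^n D_i and K_n = Σ_{i=1}^n D_i·1{D_i ≤ ε_n u_n}, one has K_n / L_n → 0 in probability as n → ∞; that is, the total degree of the non-giant vertices is negligible compared to the total degree. -/
/-!
Write `g x = P(D > x)`. The power law makes `g` regularly varying with index `-(τ - 1) > -1`,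
so for `β = τ / 2 ∈ (τ - 1, 1)` it eventually satisfies `g x ≤ 2^β g (2x)`; iterating this gives
Potter's bound `g y ≤ C (z / y)^β g z` for `0 < y ≤ z`, `z` large.

If `K_n ≥ ε L_n`, then either every `D_i` is at most `δ u_n`, which has probability
`(1 - g (δ u_n))^n ≤ exp (-n g (δ u_n)) → exp (-δ^(-(τ - 1)))`, or `K_n ≥ ε δ u_n`, which by
Markov's inequality has probability at most `n E[D; D ≤ ε_n u_n] / (ε δ u_n)`, and
`E[D; D ≤ y] ≤ ∑_{k < y} g k`. Potter's bound and `∑_{k ≤ M} k^(-β) ≤ M^(1-β) / (1 - β)` bound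
this by a constant times `n g(u_n) (u_n^(β-1) + ε_n^(1-β)) → 0`. Finally let `δ → 0`.
-/

open MeasureTheory ProbabilityTheory Filter

open Topology Finset

def RegularlyVarying (g : ℝ → ℝ) (ρ : ℝ) : Prop :=
  (∀ᶠ x in atTop, 0 < g x) ∧
    ∀ c > (0 : ℝ), Tendsto (fun x => g (c * x) / g x) atTop (𝓝 (c ^ ρ))

theorem SlowlyVarying.regularlyVarying {ℓ g : ℝ → ℝ} (hℓ : SlowlyVarying ℓ) {ρ : ℝ}
    (hg : g =ᶠ[atTop] fun x => ℓ x * x ^ ρ) : RegularlyVarying g ρ := by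
  refine ⟨?_, fun c hc => ?_⟩
  · filter_upwards [hℓ.1, hg, eventually_gt_atTop 0] with x hℓx hgx hx
    rw [hgx]
    positivity
  · have hgc : ∀ᶠ x in atTop, g (c * x) = ℓ (c * x) * (c * x) ^ ρ :=
      (tendsto_id.const_mul_atTop hc).eventually hg
    simpa using ((hℓ.2 c hc).mul_const (c ^ ρ)).congr' <| by
      filter_upwards [hℓ.1, hg, hgc, eventually_gt_atTop 0] with x hℓx hgx hgcx hx
      rw [hgx, hgcx, Real.mul_rpow hc.le hx.le]
      field_simp

namespace RegularlyVarying

variable {g : ℝ → ℝ} {ρ : ℝ}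

theorem tendsto_mul_comp_const_mul {ι : Type*} {l : Filter ι} (hg : RegularlyVarying g ρ)
    {a u : ι → ℝ} {L : ℝ} (hu : Tendsto u l atTop) (ha : Tendsto (fun i => a i * g (u i)) l (𝓝 L))
    {c : ℝ} (hc : 0 < c) : Tendsto (fun i => a i * g (c * u i)) l (𝓝 (L * c ^ ρ)) := by
  refine (ha.mul ((hg.2 c hc).comp hu)).congr' ?_
  filter_upwards [hu.eventually hg.1] with i hi
  simp only [Function.comp_apply]
  field_simp

theorem eventually_le_two_rpow_mul (hg : RegularlyVarying g ρ) {β : ℝ} (hβ : -β < ρ) :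
    ∀ᶠ x in atTop, g x ≤ 2 ^ β * g (2 * x) := by
  have hlt : (2 : ℝ) ^ (-β) < 2 ^ ρ := Real.rpow_lt_rpow_of_exponent_lt one_lt_two hβ
  filter_upwards [(hg.2 2 two_pos).eventually_const_lt hlt, hg.1] with x hx hgx
  rw [lt_div_iff₀ hgx, Real.rpow_neg zero_le_two] at hx
  have h2β : (0 : ℝ) < 2 ^ β := by positivity
  rw [inv_mul_eq_div, div_lt_iff₀' h2β] at hx
  exact hx.le

theorem exists_doubling_threshold (hg : RegularlyVarying g ρ) {β : ℝ} (hβ : -β < ρ) :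
    ∃ X > 0, 0 < g X ∧ ∀ x ≥ X, g x ≤ 2 ^ β * g (2 * x) := by
  obtain ⟨X, hX⟩ := eventually_atTop.1
    ((hg.eventually_le_two_rpow_mul hβ).and (hg.1.and (eventually_gt_atTop 0)))
  exact ⟨X, (hX X le_rfl).2.2, (hX X le_rfl).2.1, fun x hx => (hX x hx).1⟩

end RegularlyVarying

theorem Antitone.tendsto_atTop_of_tendsto_comp_zero {ι : Type*} {l : Filter ι} {g : ℝ → ℝ}
    (hg : Antitone g) (hpos : ∀ᶠ x in atTop, 0 < g x) {u : ι → ℝ}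
    (hu : Tendsto (fun i => g (u i)) l (𝓝 0)) : Tendsto u l atTop := by
  refine tendsto_atTop.2 fun A => ?_
  obtain ⟨B, hB, hAB⟩ := (hpos.and (eventually_ge_atTop A)).exists
  filter_upwards [hu.eventually_lt_const hB] with i hi
  exact hAB.trans (le_of_not_ge fun h => (hg h).not_gt hi)

theorem Antitone.tendsto_atTop_of_tendsto_natCast_mul {g : ℝ → ℝ} (hg : Antitone g)
    (hpos : ∀ᶠ x in atTop, 0 < g x) {u : ℕ → ℝ} {L : ℝ}
    (hgu : Tendsto (fun n : ℕ => (n : ℝ) * g (u n)) atTop (𝓝 L)) : Tendsto u atTop atTop :=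
  hg.tendsto_atTop_of_tendsto_comp_zero hpos <|
    (hgu.div_atTop tendsto_natCast_atTop_atTop).congr' <| by
      filter_upwards [eventually_ne_atTop 0] with n hn
      field_simp

section Potter

variable {g : ℝ → ℝ} {β X : ℝ}

theorem potter_bound (hg : Antitone g) (hg0 : ∀ x, 0 ≤ g x) (hβ : 0 ≤ β) (hX : 0 < X)
    (hdoubling : ∀ x ≥ X, g x ≤ 2 ^ β * g (2 * x)) {y z : ℝ} (hy : X ≤ y) (hyz : y ≤ z) :
    g y ≤ 2 ^ β * (z / y) ^ β * g z := by
  obtain ⟨k, hk⟩ := pow_unbounded_of_one_lt (z / y) one_lt_two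
  induction k generalizing y with
  | zero => exact absurd hyz (not_le.2 (by simpa [div_lt_one (hX.trans_le hy)] using hk))
  | succ k ih =>
    have hy0 : 0 < y := hX.trans_le hy
    have hzy : 1 ≤ z / y := (one_le_div hy0).2 hyz
    rcases le_or_gt z (2 * y) with hz | hz
    · calc g y ≤ 2 ^ β * g (2 * y) := hdoubling y hy
        _ ≤ 2 ^ β * g z := by gcongr; exact hg hz
        _ ≤ 2 ^ β * (z / y) ^ β * g z := by
          gcongr
          · exact hg0 z
          · exact le_mul_of_one_le_right (by positivity) (Real.one_le_rpow hzy hβ)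
    · have h2y : z / (2 * y) < 2 ^ k := by
        rw [pow_succ, ← div_lt_iff₀ two_pos, div_div, mul_comm y] at hk
        exact hk
      calc g y ≤ 2 ^ β * g (2 * y) := hdoubling y hy
        _ ≤ 2 ^ β * (2 ^ β * (z / (2 * y)) ^ β * g z) := by
          gcongr
          exact ih (by linarith) hz.le h2y
        _ = 2 ^ β * (z / y) ^ β * g z := by
          rw [show z / y = 2 * (z / (2 * y)) by field_simp,
            Real.mul_rpow zero_le_two (div_pos (by linarith) (by linarith)).le]
          ring

theorem one_le_potter_bound (hg : Antitone g) (hg0 : ∀ x, 0 ≤ g x) (hβ : 0 ≤ β) (hX : 0 < X)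
    (hgX : 0 < g X) (hdoubling : ∀ x ≥ X, g x ≤ 2 ^ β * g (2 * x)) {z : ℝ} (hz : X ≤ z) :
    1 ≤ 2 ^ β / g X * (z / X) ^ β * g z := by
  have := potter_bound hg hg0 hβ hX hdoubling le_rfl hz
  rwa [div_mul_eq_mul_div, div_mul_eq_mul_div, le_div_iff₀ hgX, one_mul]

theorem potter_bound_of_le_one (hg : Antitone g) (hg0 : ∀ x, 0 ≤ g x) (hg1 : ∀ x, g x ≤ 1)
    (hβ : 0 ≤ β) (hX : 0 < X) (hgX : 0 < g X) (hdoubling : ∀ x ≥ X, g x ≤ 2 ^ β * g (2 * x))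
    {y z : ℝ} (hy : 0 < y) (hyz : y ≤ z) (hz : X ≤ z) :
    g y ≤ 2 ^ β / g X * (z / y) ^ β * g z := by
  have hz0 : 0 < z := hy.trans_le hyz
  rcases le_or_gt X y with hXy | hyX
  · calc g y ≤ 2 ^ β * (z / y) ^ β * g z := potter_bound hg hg0 hβ hX hdoubling hXy hyz
      _ ≤ 2 ^ β / g X * (z / y) ^ β * g z := by
        have : (2 : ℝ) ^ β ≤ 2 ^ β / g X := le_div_self (by positivity) hgX (hg1 X)
        gcongr
        exact hg0 z
  · calc g y ≤ 1 := hg1 y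
      _ ≤ 2 ^ β / g X * (z / X) ^ β * g z := one_le_potter_bound hg hg0 hβ hX hgX hdoubling hz
      _ ≤ 2 ^ β / g X * (z / y) ^ β * g z := by
        have : (z / X) ^ β ≤ (z / y) ^ β := by gcongr
        gcongr
        exact hg0 z

end Potter

theorem add_one_rpow_neg_le_sub {β : ℝ} (hβ0 : 0 ≤ β) (hβ1 : β < 1) {x : ℝ} (hx : 0 ≤ x) :
    (x + 1) ^ (-β) ≤ (x + 1) ^ (1 - β) / (1 - β) - x ^ (1 - β) / (1 - β) := by
  have ha : 0 < x + 1 := by linarith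
  have hbern := rpow_one_add_le_one_add_mul_self (s := -1 / (x + 1))
    (by rw [neg_div, neg_le_neg_iff, div_le_one ha]; linarith) (p := 1 - β) (by linarith)
    (by linarith)
  rw [show 1 + -1 / (x + 1) = x / (x + 1) by field_simp; ring, Real.div_rpow hx ha.le,
    div_le_iff₀ (by positivity), sub_eq_add_neg 1 β, Real.rpow_add ha, Real.rpow_one] at hbern
  rw [← sub_div, le_div_iff₀ (by linarith), sub_eq_add_neg 1 β, Real.rpow_add ha, Real.rpow_one]
  field_simp at hbern
  linarith

theorem sum_range_add_one_rpow_neg_le {β : ℝ} (hβ0 : 0 ≤ β) (hβ1 : β < 1) (M : ℕ) :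
    ∑ k ∈ range M, ((k : ℝ) + 1) ^ (-β) ≤ (M : ℝ) ^ (1 - β) / (1 - β) := by
  calc ∑ k ∈ range M, ((k : ℝ) + 1) ^ (-β)
      ≤ ∑ k ∈ range M, (((k + 1 : ℕ) : ℝ) ^ (1 - β) / (1 - β) - (k : ℝ) ^ (1 - β) / (1 - β)) :=
        sum_le_sum fun k _ => by
          push_cast
          exact add_one_rpow_neg_le_sub hβ0 hβ1 k.cast_nonneg
    _ = (M : ℝ) ^ (1 - β) / (1 - β) := by
        rw [sum_range_sub (fun k : ℕ => (k : ℝ) ^ (1 - β) / (1 - β)), Nat.cast_zero,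
          Real.zero_rpow (by linarith), zero_div, sub_zero]

section TailSum

variable {g : ℝ → ℝ} {β X : ℝ}

theorem sum_range_floor_le_of_potter (hg : Antitone g) (hg0 : ∀ x, 0 ≤ g x)
    (hg1 : ∀ x, g x ≤ 1) (hβ0 : 0 ≤ β) (hβ1 : β < 1) (hX : 0 < X) (hgX : 0 < g X)
    (hdoubling : ∀ x ≥ X, g x ≤ 2 ^ β * g (2 * x)) {u ε : ℝ} (hXu : X ≤ u) (hε0 : 0 < ε)
    (hε1 : ε ≤ 1) :
    ∑ k ∈ range ⌊ε * u⌋₊, g k ≤ 2 ^ β / g X * g u * ((u / X) ^ β + u * ε ^ (1 - β) / (1 - β)) := by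
  set C := 2 ^ β / g X
  have hu0 : 0 < u := hX.trans_le hXu
  set M := ⌊ε * u⌋₊
  have hM : (M : ℝ) ≤ ε * u := Nat.floor_le (by positivity)
  have hMu : (M : ℝ) ≤ u := hM.trans (mul_le_of_le_one_left hu0.le hε1)
  have hterm : ∀ k ∈ range M, g (k + 1 : ℕ) ≤ C * u ^ β * g u * ((k : ℝ) + 1) ^ (-β) := by
    intro k hk
    have hkM : ((k + 1 : ℕ) : ℝ) ≤ M := by exact_mod_cast mem_range.1 hk
    calc g (k + 1 : ℕ) ≤ C * (u / (k + 1 : ℕ)) ^ β * g u :=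
          potter_bound_of_le_one hg hg0 hg1 hβ0 hX hgX hdoubling (by positivity)
            (hkM.trans hMu) hXu
      _ = C * u ^ β * g u * ((k : ℝ) + 1) ^ (-β) := by
          rw [Real.div_rpow hu0.le (by positivity), Real.rpow_neg (by positivity)]
          push_cast
          ring
  have hu1 : u ^ β * u ^ (1 - β) = u := by rw [← Real.rpow_add hu0]; simp
  -- `g 0` is split off because Potter's bound needs `y > 0`
  calc ∑ k ∈ range M, g k ≤ ∑ k ∈ range (M + 1), g k :=
        sum_le_sum_of_subset_of_nonneg (range_subset_range.2 M.le_succ) fun _ _ _ => hg0 _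
    _ = ∑ k ∈ range M, g (k + 1 : ℕ) + g 0 := by rw [sum_range_succ', Nat.cast_zero]
    _ ≤ ∑ k ∈ range M, C * u ^ β * g u * ((k : ℝ) + 1) ^ (-β) + C * (u / X) ^ β * g u :=
        add_le_add (sum_le_sum hterm)
          ((hg1 0).trans (one_le_potter_bound hg hg0 hβ0 hX hgX hdoubling hXu))
    _ = C * g u * (u ^ β * ∑ k ∈ range M, ((k : ℝ) + 1) ^ (-β) + (u / X) ^ β) := by
        rw [← mul_sum]
        ring
    _ ≤ C * g u * (u ^ β * ((ε * u) ^ (1 - β) / (1 - β)) + (u / X) ^ β) := by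
        have : (0 : ℝ) ≤ C * g u := mul_nonneg (by positivity) (hg0 u)
        gcongr
        exact (sum_range_add_one_rpow_neg_le hβ0 hβ1 M).trans (by gcongr)
    _ = C * g u * ((u / X) ^ β + u * ε ^ (1 - β) / (1 - β)) := by
        rw [Real.mul_rpow hε0.le hu0.le]
        linear_combination C * g u * ε ^ (1 - β) / (1 - β) * hu1

theorem tendsto_mul_sum_range_floor_div (hg : Antitone g) (hg0 : ∀ x, 0 ≤ g x)
    (hg1 : ∀ x, g x ≤ 1) (hβ0 : 0 ≤ β) (hβ1 : β < 1) (hX : 0 < X) (hgX : 0 < g X)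
    (hdoubling : ∀ x ≥ X, g x ≤ 2 ^ β * g (2 * x)) {u ε : ℕ → ℝ}
    (hgu : Tendsto (fun n : ℕ => (n : ℝ) * g (u n)) atTop (𝓝 1)) (hu : Tendsto u atTop atTop)
    (hε0 : ∀ n, 0 < ε n) (hε : Tendsto ε atTop (𝓝 0)) :
    Tendsto (fun n : ℕ => (n : ℝ) * (∑ k ∈ range ⌊ε n * u n⌋₊, g k) / u n) atTop (𝓝 0) := by
  set C := 2 ^ β / g X
  have hlim : Tendsto (fun n : ℕ => C * ((n : ℝ) * g (u n)) *
      ((X ^ β)⁻¹ * u n ^ (-(1 - β)) + ε n ^ (1 - β) / (1 - β))) atTop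
      (𝓝 (C * 1 * ((X ^ β)⁻¹ * 0 + 0 ^ (1 - β) / (1 - β)))) :=
    (hgu.const_mul C).mul <| ((tendsto_rpow_neg_atTop (by linarith)).comp hu).const_mul _ |>.add
      ((hε.rpow_const (Or.inr (by linarith))).div_const _)
  rw [Real.zero_rpow (by linarith), zero_div, mul_zero, zero_add, mul_zero] at hlim
  refine squeeze_zero' ?_ ?_ hlim
  · filter_upwards [hu.eventually_gt_atTop 0] with n hn
    exact div_nonneg (mul_nonneg n.cast_nonneg (sum_nonneg fun k _ => hg0 k)) hn.le
  · filter_upwards [hu.eventually_ge_atTop X, hε.eventually_le_const zero_lt_one] with n hXu hε1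
    have hu0 : 0 < u n := hX.trans_le hXu
    have hsum := sum_range_floor_le_of_potter hg hg0 hg1 hβ0 hβ1 hX hgX hdoubling hXu (hε0 n) hε1
    have hid : (u n / X) ^ β = (X ^ β)⁻¹ * u n ^ (-(1 - β)) * u n := by
      rw [Real.div_rpow hu0.le hX.le, neg_sub, Real.rpow_sub_one hu0.ne']
      field_simp
    rw [div_le_iff₀ hu0]
    calc (n : ℝ) * ∑ k ∈ range ⌊ε n * u n⌋₊, g k
        ≤ n * (C * g (u n) * ((u n / X) ^ β + u n * ε n ^ (1 - β) / (1 - β))) := by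
          gcongr
      _ = _ := by
          rw [hid]
          ring

end TailSum

section Truncation

variable {Ω : Type*} [MeasurableSpace Ω] {μ : Measure Ω} [IsFiniteMeasure μ]
  {D : Ω → ℕ} {Y : ℕ → Ω → ℕ}

theorem integrable_truncate (hD : Measurable D) {y : ℝ} (hy : 0 ≤ y) :
    Integrable (fun ω => if (D ω : ℝ) ≤ y then (D ω : ℝ) else 0) μ :=
  Integrable.of_bound
    ((Measurable.of_discrete (f := fun d : ℕ => if (d : ℝ) ≤ y then (d : ℝ) else 0)).comp
      hD).aestronglyMeasurable y
    (.of_forall fun ω => by split_ifs with h <;> simp [h, hy])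

theorem integral_truncate_le_sum_measureReal (hD : Measurable D) {y : ℝ} (hy : 0 ≤ y) :
    ∫ ω, (if (D ω : ℝ) ≤ y then (D ω : ℝ) else 0) ∂μ ≤
      ∑ k ∈ range ⌊y⌋₊, μ.real {ω | (k : ℝ) < D ω} := by
  have hk : ∀ k : ℕ, MeasurableSet {ω | (k : ℝ) < D ω} :=
    fun k => hD (t := {d : ℕ | (k : ℝ) < d}) .of_discrete
  have hpointwise : ∀ ω, (if (D ω : ℝ) ≤ y then (D ω : ℝ) else 0) ≤
      ∑ k ∈ range ⌊y⌋₊, {ω | (k : ℝ) < D ω}.indicator 1 ω := by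
    intro ω
    simp only [Set.indicator_apply, Set.mem_ofPred_eq, Pi.one_apply, Nat.cast_lt]
    split_ifs with h
    · calc (D ω : ℝ) = ∑ k ∈ range (D ω), if k < D ω then (1 : ℝ) else 0 := by
            simp [sum_ite_of_true (fun k hk => mem_range.1 hk)]
        _ ≤ ∑ k ∈ range ⌊y⌋₊, if k < D ω then (1 : ℝ) else 0 :=
            sum_le_sum_of_subset_of_nonneg (range_subset_range.2 (Nat.le_floor h))
              fun _ _ _ => by positivity
    · exact sum_nonneg fun _ _ => by positivity
  calc ∫ ω, (if (D ω : ℝ) ≤ y then (D ω : ℝ) else 0) ∂μ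
      ≤ ∫ ω, ∑ k ∈ range ⌊y⌋₊, {ω | (k : ℝ) < D ω}.indicator 1 ω ∂μ :=
        integral_mono (integrable_truncate hD hy)
          (integrable_finsetSum _ fun k _ => (integrable_const 1).indicator (hk k)) hpointwise
    _ = ∑ k ∈ range ⌊y⌋₊, μ.real {ω | (k : ℝ) < D ω} := by
        rw [integral_finsetSum _ fun k _ => (integrable_const 1).indicator (hk k)]
        exact sum_congr rfl fun k _ => integral_indicator_one (hk k)

theorem measureReal_sum_truncate_ge_le (hD : Measurable D)
    (hident : ∀ i, IdentDistrib (Y i) D μ μ) (n : ℕ) {y a : ℝ} (hy : 0 ≤ y) (ha : 0 < a) :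
    μ.real {ω | a ≤ ∑ i ∈ range n, if (Y i ω : ℝ) ≤ y then (Y i ω : ℝ) else 0} ≤
      n * (∑ k ∈ range ⌊y⌋₊, μ.real {ω | (k : ℝ) < D ω}) / a := by
  set φ : ℕ → ℝ := fun d => if (d : ℝ) ≤ y then (d : ℝ) else 0
  have hφ : Measurable φ := .of_discrete
  have hφY : ∀ i, Integrable (fun ω => φ (Y i ω)) μ :=
    fun i => ((hident i).comp hφ).integrable_iff.2 (integrable_truncate hD hy)
  have hmean : ∫ ω, ∑ i ∈ range n, φ (Y i ω) ∂μ = n * ∫ ω, φ (D ω) ∂μ := by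
    rw [integral_finsetSum _ fun i _ => hφY i]
    exact (sum_congr rfl fun i _ => ((hident i).comp hφ).integral_eq).trans (by simp)
  rw [le_div_iff₀ ha, mul_comm]
  calc a * μ.real {ω | a ≤ ∑ i ∈ range n, φ (Y i ω)}
      ≤ ∫ ω, ∑ i ∈ range n, φ (Y i ω) ∂μ :=
        mul_meas_ge_le_integral_of_nonneg (.of_forall fun ω => sum_nonneg fun i _ => by
          simp only [φ]; split_ifs <;> positivity) (integrable_finsetSum _ fun i _ => hφY i) a
    _ ≤ n * ∑ k ∈ range ⌊y⌋₊, μ.real {ω | (k : ℝ) < D ω} := by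
        rw [hmean]
        gcongr
        exact integral_truncate_le_sum_measureReal hD hy

end Truncation

theorem exists_exp_neg_rpow_neg_lt {α r : ℝ} (hα : 0 < α) (hr : 0 < r) :
    ∃ δ > 0, Real.exp (-δ ^ (-α)) < r := by
  obtain ⟨δ, hδr, hδ⟩ := (((Real.tendsto_exp_neg_atTop_nhds_zero.comp
    (tendsto_rpow_neg_nhdsGT_zero (neg_neg_of_pos hα))).eventually (gt_mem_nhds hr)).and
    self_mem_nhdsWithin).exists
  exact ⟨δ, hδ, hδr⟩

section Sampling

variable {Ω : Type*} [MeasurableSpace Ω] {μ : Measure Ω} [IsProbabilityMeasure μ]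
  {D : Ω → ℕ} {Y : ℕ → Ω → ℕ}

theorem measureReal_forall_le_eq_pow (hD : Measurable D) (hindep : iIndepFun Y μ)
    (hident : ∀ i, IdentDistrib (Y i) D μ μ) (n : ℕ) (b : ℝ) :
    μ.real {ω | ∀ i ∈ range n, (Y i ω : ℝ) ≤ b} = (1 - μ.real {ω | b < (D ω : ℝ)}) ^ n := by
  have hs : MeasurableSet {d : ℕ | (d : ℝ) ≤ b} := .of_discrete
  have hcompl : D ⁻¹' {d : ℕ | (d : ℝ) ≤ b} = {ω | b < (D ω : ℝ)}ᶜ := by ext; simp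
  have hinter : {ω | ∀ i ∈ range n, (Y i ω : ℝ) ≤ b} =
      ⋂ i ∈ range n, Y i ⁻¹' {d : ℕ | (d : ℝ) ≤ b} := by ext; simp
  rw [hinter, measureReal_def, hindep.measure_inter_preimage_eq_mul _ fun _ _ => hs,
    prod_congr rfl fun i _ => (hident i).measure_mem_eq hs]
  have hgt : MeasurableSet {ω | b < (D ω : ℝ)} := hD (t := {d : ℕ | b < d}) .of_discrete
  rw [prod_const, card_range, ENNReal.toReal_pow, ← measureReal_def, hcompl,
    probReal_compl_eq_one_sub hgt]

theorem measureReal_ratio_ge_le (hD : Measurable D) (hindep : iIndepFun Y μ)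
    (hident : ∀ i, IdentDistrib (Y i) D μ μ) (n : ℕ) {ε b y : ℝ} (hε : 0 < ε) (hb : 0 < b)
    (hy : 0 ≤ y) :
    μ.real {ω | ε ≤ (∑ i ∈ range n, if (Y i ω : ℝ) ≤ y then (Y i ω : ℝ) else 0) /
        ∑ i ∈ range n, (Y i ω : ℝ)} ≤
      (1 - μ.real {ω | b < (D ω : ℝ)}) ^ n +
        n * (∑ k ∈ range ⌊y⌋₊, μ.real {ω | (k : ℝ) < D ω}) / (ε * b) := by
  set K : Ω → ℝ := fun ω => ∑ i ∈ range n, if (Y i ω : ℝ) ≤ y then (Y i ω : ℝ) else 0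
  have hsub : {ω | ε ≤ K ω / ∑ i ∈ range n, (Y i ω : ℝ)} ⊆
      {ω | ∀ i ∈ range n, (Y i ω : ℝ) ≤ b} ∪ {ω | ε * b ≤ K ω} := by
    intro ω hω
    by_cases hmax : ∀ i ∈ range n, (Y i ω : ℝ) ≤ b
    · exact .inl hmax
    · push Not at hmax
      obtain ⟨i, hi, hbi⟩ := hmax
      have hL : b < ∑ i ∈ range n, (Y i ω : ℝ) :=
        hbi.trans_le (single_le_sum (fun j _ => (Y j ω).cast_nonneg) hi)
      refine .inr ((mul_le_mul_of_nonneg_left hL.le hε.le).trans ?_)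
      exact (le_div_iff₀ (hb.trans hL)).1 hω
  calc _ ≤ μ.real ({ω | ∀ i ∈ range n, (Y i ω : ℝ) ≤ b} ∪ {ω | ε * b ≤ K ω}) :=
        measureReal_mono hsub
    _ ≤ _ := (measureReal_union_le _ _).trans <| by
        rw [measureReal_forall_le_eq_pow hD hindep hident]
        gcongr
        exact measureReal_sum_truncate_ge_le hD hident n hy (by positivity)

theorem tendsto_measureReal_ratio_ge (hD : Measurable D) (hindep : iIndepFun Y μ)
    (hident : ∀ i, IdentDistrib (Y i) D μ μ) {α : ℝ} (hα : 0 < α)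
    (hreg : RegularlyVarying (fun x => μ.real {ω | x < (D ω : ℝ)}) (-α)) {u y : ℕ → ℝ}
    (hu : Tendsto u atTop atTop)
    (hgu : Tendsto (fun n : ℕ => (n : ℝ) * μ.real {ω | u n < (D ω : ℝ)}) atTop (𝓝 1))
    (hy : ∀ n, 0 ≤ y n)
    (hsum : Tendsto (fun n : ℕ => (n : ℝ) * (∑ k ∈ range ⌊y n⌋₊, μ.real {ω | (k : ℝ) < D ω}) /
      u n) atTop (𝓝 0)) {ε : ℝ} (hε : 0 < ε) :
    Tendsto (fun n : ℕ => μ.real {ω | ε ≤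
      (∑ i ∈ range n, if (Y i ω : ℝ) ≤ y n then (Y i ω : ℝ) else 0) /
        ∑ i ∈ range n, (Y i ω : ℝ)}) atTop (𝓝 0) := by
  refine tendsto_order.2 ⟨fun r hr => .of_forall fun n => hr.trans_le measureReal_nonneg,
    fun r hr => ?_⟩
  obtain ⟨δ, hδ, hδr⟩ := exists_exp_neg_rpow_neg_lt hα hr
  have hlim := ((hreg.tendsto_mul_comp_const_mul hu hgu hδ).neg.rexp).add
    (hsum.div_const (ε * δ))
  rw [one_mul, zero_div, add_zero] at hlim
  filter_upwards [hlim.eventually (gt_mem_nhds hδr), hu.eventually_gt_atTop 0] with n hn hun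
  refine (measureReal_ratio_ge_le hD hindep hident n hε (mul_pos hδ hun) (hy n)).trans_lt
    (lt_of_le_of_lt ?_ hn)
  gcongr ?_ + ?_
  · rw [← mul_neg, Real.exp_nat_mul]
    exact pow_le_pow_left₀ (sub_nonneg.2 measureReal_le_one) (Real.one_sub_le_exp_neg _) n
  · rw [div_div, show u n * (ε * δ) = ε * (δ * u n) by ring]

end Sampling

theorem stmt8_general
    {Ω : Type*} [MeasureSpace Ω] [IsProbabilityMeasure (ℙ : Measure Ω)]
    (D : Ω → ℕ) (hDmeas : Measurable D)
    (τ : ℝ) (hτ : τ ∈ Set.Ioo (1 : ℝ) 2)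
    (ℓ : ℝ → ℝ) (hℓ : SlowlyVarying ℓ)
    (hpow : ∀ x ≥ (1 : ℝ), (ℙ {ω | x < (D ω : ℝ)}).toReal = ℓ x * x ^ (-(τ - 1)))
    (Dseq : ℕ → Ω → ℕ)
    (hindep : iIndepFun Dseq ℙ)
    (hident : ∀ i, IdentDistrib (Dseq i) D ℙ ℙ)
    (u : ℕ → ℝ) (hupos : ∀ n, 0 < u n)
    (hu : Tendsto (fun n : ℕ => (n : ℝ) * (ℙ {ω | u n < (D ω : ℝ)}).toReal)
      atTop (nhds 1))
    (εseq : ℕ → ℝ) (hεpos : ∀ n, 0 < εseq n) (hεlim : Tendsto εseq atTop (nhds 0)) :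
    ∀ ε > (0 : ℝ),
      Tendsto
        (fun n : ℕ =>
          ℙ {ω | ε ≤
              (∑ i ∈ Finset.range n,
                  if (Dseq i ω : ℝ) ≤ εseq n * u n then (Dseq i ω : ℝ) else 0) /
                (∑ i ∈ Finset.range n, (Dseq i ω : ℝ))})
        atTop (nhds 0) := by
  intro ε hε
  obtain ⟨hτ1, hτ2⟩ := hτ
  set g : ℝ → ℝ := fun x => (ℙ : Measure Ω).real {ω | x < (D ω : ℝ)}
  have hg : Antitone g := fun x y hxy => measureReal_mono fun ω hω => hxy.trans_lt hω
  have hgu : Tendsto (fun n : ℕ => (n : ℝ) * g (u n)) atTop (𝓝 1) := hu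
  have hreg : RegularlyVarying g (-(τ - 1)) :=
    hℓ.regularlyVarying ((eventually_ge_atTop 1).mono hpow)
  obtain ⟨X, hX, hgX, hdoubling⟩ := hreg.exists_doubling_threshold (β := τ / 2) (by linarith)
  have hu' : Tendsto u atTop atTop := hg.tendsto_atTop_of_tendsto_natCast_mul hreg.1 hgu
  have hsum := tendsto_mul_sum_range_floor_div hg (fun _ => measureReal_nonneg)
    (fun _ => measureReal_le_one) (by linarith) (by linarith) hX hgX hdoubling hgu hu' hεpos hεlim
  exact (ENNReal.tendsto_toReal_zero_iff fun _ => measure_ne_top _ _).1 <|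
    tendsto_measureReal_ratio_ge hDmeas hindep hident (by linarith) hreg hu' hgu
      (fun n => (mul_pos (hεpos n) (hupos n)).le) hsum hε

/-- With `D` power-law with exponent `τ ∈ (1,2)` and slowly varying `ℓ`,
`(Dseq i)` i.i.d. copies of `D`, `u_n > 0` with `n(1 - F(u_n)) → 1`, and `ε_n > 0` with
`ε_n → 0`, the total degree of the non-giants `K_n = Σ_{i<n} Dseq i · 1{Dseq i ≤ ε_n u_n}`
satisfies `K_n / L_n → 0` in probability, where `L_n = Σ_{i<n} Dseq i`. -/
theorem stmt8
    {Ω : Type*} [MeasureSpace Ω] [IsProbabilityMeasure (ℙ : Measure Ω)]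
    (D : Ω → ℕ) (hDmeas : Measurable D) (hDpos : ∀ ω, 1 ≤ D ω)
    (τ : ℝ) (hτ : τ ∈ Set.Ioo (1 : ℝ) 2)
    (ℓ : ℝ → ℝ) (hℓ : SlowlyVarying ℓ)
    (hpow : ∀ x ≥ (1 : ℝ), (ℙ {ω | x < (D ω : ℝ)}).toReal = ℓ x * x ^ (-(τ - 1)))
    (Dseq : ℕ → Ω → ℕ) (hDseqmeas : ∀ i, Measurable (Dseq i))
    (hindep : iIndepFun Dseq ℙ)
    (hident : ∀ i, IdentDistrib (Dseq i) D ℙ ℙ)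
    (u : ℕ → ℝ) (hupos : ∀ n, 0 < u n)
    (hu : Tendsto (fun n : ℕ => (n : ℝ) * (ℙ {ω | u n < (D ω : ℝ)}).toReal)
      atTop (nhds 1))
    (εseq : ℕ → ℝ) (hεpos : ∀ n, 0 < εseq n) (hεlim : Tendsto εseq atTop (nhds 0)) :
    ∀ ε > (0 : ℝ),
      Tendsto
        (fun n : ℕ =>
          ℙ {ω | ε ≤
              (∑ i ∈ Finset.range n,
                  if (Dseq i ω : ℝ) ≤ εseq n * u n then (Dseq i ω : ℝ) else 0) /
                (∑ i ∈ Finset.range n, (Dseq i ω : ℝ))})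
        atTop (nhds 0) :=
  stmt8_general D hDmeas τ hτ ℓ hℓ hpow Dseq hindep hident u hupos hu εseq hεpos hεlim
end

section
/- Let D satisfy the power-law assumption with exponent τ ∈ (1,2) and slowly varying function ℓ, fix 0 < α < 1/(τ−1), and let (ε_n) be a sequence of positive reals with ε_n → 0. Let (D_i(n))_{i=1}^n be i.i.d. copies of D(n), the variable D conditioned to be at most n^α. Then for every γ with 0 < γ < 1 − α(τ−1), P(#{i ≤ n : D_i(n) > ε_n n^α} ≥ n^γ) → 1 as n → ∞; that is, with high probability the number of giant-degree vertices in the conditioned model is at least n^γ. -/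
open MeasureTheory ProbabilityTheory Filter

/-!
The tail `G x = ℙ(D > x) = ℓ(x) x^{-(τ-1)}` is regularly varying, so for every `s > τ - 1` the
mass `G (x/2) - G x` that `D` puts on `(x/2, x]` is eventually at least `c x^{-s}`; the lower
bound `G x ≥ c x^{-s}` comes from `ℓ(2x)/ℓ(x) → 1` by dyadic induction, using only monotonicity
of `G` (no local boundedness of `ℓ` is available). Conditioning on `D ≤ n^α` can only increase the
mass of `(n^α/2, n^α]`, so once `ε_n ≤ 1/2` each `D_i(n)` is giant with probability at least
`c n^{-αs}`, and the expected number of giant degrees is at least `c n^{1-αs}`. Taking `s` with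
`1 - αs > γ`, Chebyshev's inequality for a sum of independent indicators (whose variance is at most
its mean) bounds the probability of fewer than `n^γ` giant degrees by `4 / (c n^{1-αs}) → 0`.
-/

theorem SlowlyVarying.eventually_mul_le {ℓ : ℝ → ℝ} (hℓ : SlowlyVarying ℓ) {c r : ℝ}
    (hc : 0 < c) (hr : r < 1) : ∀ᶠ x in atTop, r * ℓ x ≤ ℓ (c * x) := by
  filter_upwards [hℓ.1, (hℓ.2 c hc).eventually (eventually_ge_nhds hr)] with x hpos hratio
  rwa [le_div_iff₀ hpos] at hratio

theorem exists_mul_rpow_neg_le_of_two_mul {g : ℝ → ℝ} {x₀ s : ℝ} (hx₀ : 0 < x₀) (hs : 0 ≤ s)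
    (hg : AntitoneOn g (Set.Ici x₀)) (hpos : 0 < g x₀)
    (hstep : ∀ x ≥ x₀, 2 ^ (-s) * g x ≤ g (2 * x)) :
    ∃ c > 0, ∀ x ≥ x₀, c * x ^ (-s) ≤ g x := by
  have hpos₂ : 0 < g (2 * x₀) := lt_of_lt_of_le (by positivity) (hstep x₀ le_rfl)
  refine ⟨g (2 * x₀) * x₀ ^ s, by positivity, ?_⟩
  have hbase : ∀ x, x₀ ≤ x → x ≤ 2 * x₀ → g (2 * x₀) * x₀ ^ s * x ^ (-s) ≤ g x := by
    intro x hx hx₂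
    have hx0 : 0 < x := hx₀.trans_le hx
    have hratio : x₀ ^ s * x ^ (-s) ≤ 1 := by
      rw [Real.rpow_neg hx0.le, ← div_eq_mul_inv, div_le_one (by positivity)]
      exact Real.rpow_le_rpow hx₀.le hx hs
    calc g (2 * x₀) * x₀ ^ s * x ^ (-s) = g (2 * x₀) * (x₀ ^ s * x ^ (-s)) := by ring
      _ ≤ g (2 * x₀) := mul_le_of_le_one_right hpos₂.le hratio
      _ ≤ g x := hg hx (by simp only [Set.mem_Ici]; linarith) hx₂
  have hdyadic : ∀ k : ℕ, ∀ x, x₀ ≤ x → x ≤ 2 ^ k * x₀ →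
      g (2 * x₀) * x₀ ^ s * x ^ (-s) ≤ g x := by
    intro k
    induction k with
    | zero => exact fun x hx hxk => hbase x hx (by linarith)
    | succ k ih =>
      intro x hx hxk
      rcases le_or_gt x (2 * x₀) with hx₂ | hx₂
      · exact hbase x hx hx₂
      have hx0 : 0 < x := hx₀.trans_le hx
      have hhalf := ih (x / 2) (by linarith) (by rw [pow_succ] at hxk; linarith)
      calc g (2 * x₀) * x₀ ^ s * x ^ (-s)
          = 2 ^ (-s) * (g (2 * x₀) * x₀ ^ s * (x / 2) ^ (-s)) := by
            rw [Real.div_rpow hx0.le zero_le_two, Real.rpow_neg zero_le_two,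
              Real.rpow_neg hx0.le]
            field_simp
        _ ≤ 2 ^ (-s) * g (x / 2) := by gcongr
        _ ≤ g (2 * (x / 2)) := hstep _ (by linarith)
        _ = g x := by ring_nf
  intro x hx
  obtain ⟨k, hk⟩ := pow_unbounded_of_one_lt (x / x₀) one_lt_two
  exact hdyadic k x hx (by rw [div_lt_iff₀ hx₀] at hk; linarith)

section RegularlyVaryingTail

variable {G ℓ : ℝ → ℝ} {β : ℝ} (hℓ : SlowlyVarying ℓ) (hGℓ : ∀ x ≥ 1, G x = ℓ x * x ^ (-β))
include hℓ hGℓ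

theorem exists_mul_rpow_neg_le (hG : Antitone G) {s : ℝ} (hs : 0 ≤ s) (hβs : β < s) :
    ∃ c > 0, ∀ᶠ x in atTop, c * x ^ (-s) ≤ G x := by
  have hstep : ∀ᶠ x in atTop, 2 ^ (-s) * G x ≤ G (2 * x) := by
    filter_upwards [hℓ.eventually_mul_le (r := 2 ^ (-(s - β))) two_pos
      (Real.rpow_lt_one_of_one_lt_of_neg one_lt_two (by linarith)), eventually_ge_atTop 1]
      with x hx hx₁
    rw [hGℓ x hx₁, hGℓ (2 * x) (by linarith), Real.mul_rpow zero_le_two (by linarith),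
      show -s = -(s - β) + -β by ring, Real.rpow_add two_pos]
    calc 2 ^ (-(s - β)) * 2 ^ (-β) * (ℓ x * x ^ (-β))
        = 2 ^ (-(s - β)) * ℓ x * (2 ^ (-β) * x ^ (-β)) := by ring
      _ ≤ ℓ (2 * x) * (2 ^ (-β) * x ^ (-β)) := by gcongr
  obtain ⟨x₀, hx₀⟩ := eventually_atTop.1 (hstep.and (hℓ.1.and (eventually_ge_atTop 1)))
  obtain ⟨-, hℓx₀, hx₀₁⟩ := hx₀ x₀ le_rfl
  obtain ⟨c, hc, hcG⟩ := exists_mul_rpow_neg_le_of_two_mul (by linarith) hs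
    (hG.antitoneOn _) (by rw [hGℓ x₀ hx₀₁]; positivity) fun x hx => (hx₀ x hx).1
  exact ⟨c, hc, eventually_atTop.2 ⟨x₀, hcG⟩⟩

theorem exists_mul_le_sub_half (hβ : 0 < β) :
    ∃ c > 0, ∀ᶠ x in atTop, c * G x ≤ G (x / 2) - G x := by
  refine ⟨2 ^ (β / 2) - 1, by simp [Real.one_lt_rpow_iff_of_pos, hβ], ?_⟩
  filter_upwards [hℓ.eventually_mul_le (r := (2 ^ (β / 2))⁻¹) one_half_pos
    (inv_lt_one_of_one_lt₀ (Real.one_lt_rpow one_lt_two (by linarith))),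
    eventually_ge_atTop 2] with x hx hx₂
  have hx0 : 0 < x := by linarith
  have hhalf : (x / 2) ^ (-β) = 2 ^ (β / 2) * 2 ^ (β / 2) * x ^ (-β) := by
    rw [← Real.rpow_add two_pos, add_halves, Real.div_rpow hx0.le zero_le_two,
      Real.rpow_neg zero_le_two, div_inv_eq_mul, mul_comm]
  rw [hGℓ x (by linarith), hGℓ (x / 2) (by linarith), hhalf, ← one_div_mul_eq_div 2 x]
  calc (2 ^ (β / 2) - 1) * (ℓ x * x ^ (-β))
      = (2 ^ (β / 2))⁻¹ * ℓ x * (2 ^ (β / 2) * 2 ^ (β / 2) * x ^ (-β)) - ℓ x * x ^ (-β) := by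
        field_simp
    _ ≤ ℓ (1 / 2 * x) * (2 ^ (β / 2) * 2 ^ (β / 2) * x ^ (-β)) - ℓ x * x ^ (-β) := by
        gcongr

theorem exists_mul_rpow_neg_le_sub_half (hG : Antitone G) (hβ : 0 < β) {s : ℝ} (hβs : β < s) :
    ∃ c > 0, ∀ᶠ x in atTop, c * x ^ (-s) ≤ G (x / 2) - G x := by
  obtain ⟨c₁, hc₁, h₁⟩ := exists_mul_rpow_neg_le hℓ hGℓ hG (by linarith) hβs
  obtain ⟨c₂, hc₂, h₂⟩ := exists_mul_le_sub_half hℓ hGℓ hβ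
  refine ⟨c₂ * c₁, by positivity, ?_⟩
  filter_upwards [h₁, h₂] with x hx₁ hx₂
  calc c₂ * c₁ * x ^ (-s) = c₂ * (c₁ * x ^ (-s)) := mul_assoc _ _ _
    _ ≤ c₂ * G x := by gcongr
    _ ≤ G (x / 2) - G x := hx₂

end RegularlyVaryingTail

theorem eventually_mul_rpow_le_mul_rpow {a c γ θ : ℝ} (hc : 0 < c) (hγθ : γ < θ) :
    ∀ᶠ x : ℝ in atTop, a * x ^ γ ≤ c * x ^ θ := by
  filter_upwards [((tendsto_rpow_atTop (sub_pos.2 hγθ)).const_mul_atTop hc).eventually_ge_atTop a,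
    eventually_gt_atTop 0] with x hx hx0
  calc a * x ^ γ ≤ c * x ^ (θ - γ) * x ^ γ := by gcongr
    _ = c * x ^ θ := by rw [mul_assoc, ← Real.rpow_add hx0, sub_add_cancel]

section Counting

variable {Ω : Type*} [MeasurableSpace Ω] {μ : Measure Ω} [IsProbabilityMeasure μ]

theorem variance_indicator_one_le {E : Set Ω} (hE : MeasurableSet E) :
    variance (E.indicator 1) μ ≤ μ.real E := by
  calc variance (E.indicator 1) μ ≤ μ[(E.indicator 1) ^ 2] :=
        variance_le_expectation_sq (measurable_one.indicator hE).aestronglyMeasurable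
    _ = μ.real E := by
        rw [← integral_indicator_one hE]
        congr 1
        funext ω
        by_cases h : ω ∈ E <;> simp [h]

theorem measure_card_filter_lt_le {ι β : Type*} [MeasurableSpace β] {X : ι → Ω → β}
    {s : Finset ι} (hX : ∀ i, Measurable (X i))
    (hind : Set.Pairwise s fun i j => IndepFun (X i) (X j) μ)
    {p : β → Prop} [DecidablePred p] (hp : MeasurableSet {b | p b}) {m t : ℝ} (hm : 0 < m)
    (hmp : m ≤ ∑ i ∈ s, μ.real {ω | p (X i ω)}) (ht : 2 * t ≤ m) :
    μ {ω | ((s.filter fun i => p (X i ω)).card : ℝ) < t} ≤ ENNReal.ofReal (4 / m) := by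
  set E : ι → Set Ω := fun i => {ω | p (X i ω)}
  have hE : ∀ i, MeasurableSet (E i) := fun i => hX i hp
  set M := ∑ i ∈ s, μ.real (E i)
  set N : Ω → ℝ := ∑ i ∈ s, (E i).indicator 1
  have hN : ∀ ω, ((s.filter fun i => p (X i ω)).card : ℝ) = N ω := by
    intro ω
    simp only [N, Finset.card_filter, Nat.cast_sum, Finset.sum_apply]
    refine Finset.sum_congr rfl fun i _ => ?_
    by_cases h : p (X i ω) <;> simp [E, h]
  have hZ : ∀ i, MemLp ((E i).indicator (1 : Ω → ℝ)) 2 μ :=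
    fun i => (memLp_const 1).indicator (hE i)
  have hmean : μ[N] = M := by
    simp only [N, Finset.sum_apply]
    rw [integral_finsetSum _ fun i _ => (hZ i).integrable one_le_two]
    exact Finset.sum_congr rfl fun i _ => integral_indicator_one (hE i)
  have hvar : variance N μ ≤ M := by
    rw [IndepFun.variance_sum (fun i _ => hZ i) fun i hi j hj hij =>
      (hind hi hj hij).comp (measurable_one.indicator hp) (measurable_one.indicator hp)]
    exact Finset.sum_le_sum fun i _ => variance_indicator_one_le (hE i)
  have hMt : M / 2 ≤ M - t := by linarith
  have hsub : {ω | ((s.filter fun i => p (X i ω)).card : ℝ) < t} ⊆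
      {ω | M - t ≤ |N ω - μ[N]|} := by
    intro ω hω
    simp only [Set.mem_ofPred_eq, hN, hmean] at hω ⊢
    linarith [neg_le_abs (N ω - M)]
  refine (measure_mono hsub).trans <| (meas_ge_le_variance_div_sq
    (memLp_finsetSum' _ fun i _ => hZ i) (by linarith)).trans (ENNReal.ofReal_le_ofReal ?_)
  calc variance N μ / (M - t) ^ 2 ≤ M / (M / 2) ^ 2 := by
        gcongr
        exact pow_pos (by linarith) 2
    _ = 4 / M := by field_simp; ring
    _ ≤ 4 / m := by gcongr

end Counting

/-- `Y` is distributed as `D` conditioned on `D ≤ x`: the `D(n)` of the statement for `x = n^α`. -/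
def IsConditionedLE {Ω : Type*} [MeasurableSpace Ω] (μ : Measure Ω) (Y D : Ω → ℕ) (x : ℝ) :
    Prop :=
  ∀ j : ℕ, μ {ω | Y ω = j} =
    if 1 ≤ j ∧ (j : ℝ) ≤ x then μ {ω | D ω = j} / μ {ω | (D ω : ℝ) ≤ x} else 0

section Conditioned

variable {Ω : Type*} [MeasurableSpace Ω] {μ : Measure Ω} [IsProbabilityMeasure μ]
  {D Y : Ω → ℕ} {x : ℝ}

theorem IsConditionedLE.measure_preimage_le (hYD : IsConditionedLE μ Y D x) (hY : Measurable Y)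
    {S : Set ℕ} (hS : ∀ j ∈ S, 1 ≤ j ∧ (j : ℝ) ≤ x) : μ (D ⁻¹' S) ≤ μ (Y ⁻¹' S) := by
  calc μ (D ⁻¹' S) = μ (⋃ j ∈ S, D ⁻¹' {j}) := by rw [Set.biUnion_preimage_singleton]
    _ ≤ ∑' j : S, μ (D ⁻¹' {(j : ℕ)}) := measure_biUnion_le μ S.to_countable _
    _ ≤ ∑' j : S, μ (Y ⁻¹' {(j : ℕ)}) := by
        refine ENNReal.tsum_le_tsum fun j => ?_
        change μ {ω | D ω = j} ≤ μ {ω | Y ω = j}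
        rw [hYD, if_pos (hS j j.2), ENNReal.div_eq_inv_mul]
        exact le_mul_of_one_le_left' (ENNReal.one_le_inv.2 prob_le_one)
    _ = μ (Y ⁻¹' S) :=
        tsum_measure_preimage_singleton S.to_countable fun j _ => hY (measurableSet_singleton j)

theorem IsConditionedLE.measureReal_sub_le (hYD : IsConditionedLE μ Y D x) (hY : Measurable Y)
    {a : ℝ} (ha : a ≤ x / 2) :
    μ.real {ω | x / 2 < D ω} - μ.real {ω | x < D ω} ≤ μ.real {ω | a < Y ω} := by
  set S : Set ℕ := {j | x / 2 < j ∧ (j : ℝ) ≤ x}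
  have hS : ∀ j ∈ S, 1 ≤ j ∧ (j : ℝ) ≤ x := by
    rintro j ⟨hj, hjx⟩
    refine ⟨Nat.one_le_iff_ne_zero.2 ?_, hjx⟩
    rintro rfl
    simp only [Nat.cast_zero] at hj hjx
    linarith
  have hsplit : {ω | x / 2 < D ω} ⊆ D ⁻¹' S ∪ {ω | x < D ω} := by
    intro ω hω
    by_cases h : x < D ω
    · exact Or.inr h
    · exact Or.inl ⟨hω, not_lt.1 h⟩
  have hYS : Y ⁻¹' S ⊆ {ω | a < Y ω} := fun ω hω => ha.trans_lt hω.1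
  calc μ.real {ω | x / 2 < D ω} - μ.real {ω | x < D ω} ≤ μ.real (D ⁻¹' S) := by
        linarith [measureReal_mono hsplit (μ := μ),
          measureReal_union_le (μ := μ) (D ⁻¹' S) {ω | x < D ω}]
    _ ≤ μ.real (Y ⁻¹' S) :=
        ENNReal.toReal_mono (measure_ne_top _ _) (hYD.measure_preimage_le hY hS)
    _ ≤ μ.real {ω | a < Y ω} := measureReal_mono hYS

theorem measure_card_filter_lt_le_of_isConditionedLE {Y : ℕ → Ω → ℕ} {n : ℕ}
    (hY : ∀ i, Measurable (Y i)) (hind : iIndepFun (fun i : Fin n => Y i) μ)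
    (hYD : ∀ i < n, IsConditionedLE μ (Y i) D x) {a t m : ℝ} (ha : a ≤ x / 2) (hm : 0 < m)
    (hmD : m ≤ n * (μ.real {ω | x / 2 < D ω} - μ.real {ω | x < D ω})) (ht : 2 * t ≤ m) :
    μ {ω | (((Finset.range n).filter fun i => a < (Y i ω : ℝ)).card : ℝ) < t} ≤
      ENNReal.ofReal (4 / m) := by
  have hpair : Set.Pairwise (Finset.range n : Set ℕ) fun i j => IndepFun (Y i) (Y j) μ :=
    fun i hi j hj hij => hind.indepFun (i := ⟨i, Finset.mem_range.1 hi⟩)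
      (j := ⟨j, Finset.mem_range.1 hj⟩) (by simpa [Fin.ext_iff] using hij)
  refine measure_card_filter_lt_le hY hpair (p := fun j : ℕ => a < j) .of_discrete hm ?_ ht
  calc m ≤ ∑ _i ∈ Finset.range n, (μ.real {ω | x / 2 < D ω} - μ.real {ω | x < D ω}) := by
        rwa [Finset.sum_const, Finset.card_range, nsmul_eq_mul]
    _ ≤ ∑ i ∈ Finset.range n, μ.real {ω | a < (Y i ω : ℝ)} := Finset.sum_le_sum fun i hi =>
        (hYD i (Finset.mem_range.1 hi)).measureReal_sub_le (hY i) ha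

end Conditioned

theorem tendsto_measure_one_of_tendsto_measure_compl {Ω ι : Type*} [MeasurableSpace Ω]
    {μ : Measure Ω} [IsProbabilityMeasure μ] {l : Filter ι} {s : ι → Set Ω}
    (h : Tendsto (fun i => μ (s i)ᶜ) l (nhds 0)) : Tendsto (fun i => μ (s i)) l (nhds 1) := by
  have hsub : Tendsto (fun i => 1 - μ (s i)ᶜ) l (nhds 1) := by
    simpa using ENNReal.Tendsto.sub tendsto_const_nhds h (Or.inl ENNReal.one_ne_top)
  refine tendsto_of_tendsto_of_tendsto_of_le_of_le hsub tendsto_const_nhds (fun i => ?_)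
    fun i => prob_le_one
  rw [tsub_le_iff_right, ← measure_univ (μ := μ)]
  exact measure_univ_le_add_compl _

theorem stmt13_general
    {Ω : Type*} [MeasureSpace Ω] [IsProbabilityMeasure (ℙ : Measure Ω)]
    (D : Ω → ℕ)
    (τ : ℝ) (hτ : τ ∈ Set.Ioo (1 : ℝ) 2)
    (ℓ : ℝ → ℝ) (hℓ : SlowlyVarying ℓ)
    (hpow : ∀ x ≥ (1 : ℝ), (ℙ {ω | x < (D ω : ℝ)}).toReal = ℓ x * x ^ (-(τ - 1)))
    (α : ℝ) (hα : 0 < α)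
    (εseq : ℕ → ℝ) (hεlim : Tendsto εseq atTop (nhds 0))
    (D' : ℕ → ℕ → Ω → ℕ) (hD'meas : ∀ n i, Measurable (D' n i))
    (hD'indep : ∀ n, iIndepFun (fun i : Fin n => D' n i) ℙ)
    (hD'dist : ∀ n, ∀ i < n, ∀ j : ℕ,
      ℙ {ω | D' n i ω = j}
        = if 1 ≤ j ∧ (j : ℝ) ≤ (n : ℝ) ^ α then
            ℙ {ω | D ω = j} / ℙ {ω | (D ω : ℝ) ≤ (n : ℝ) ^ α}
          else 0) :
    ∀ γ : ℝ, 0 < γ → γ < 1 - α * (τ - 1) →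
      Tendsto
        (fun n : ℕ =>
          ℙ {ω | (n : ℝ) ^ γ ≤
              (((Finset.range n).filter
                (fun i => εseq n * (n : ℝ) ^ α < (D' n i ω : ℝ))).card : ℝ)})
        atTop (nhds 1) := by
  intro γ hγ hγα
  obtain ⟨s, hβs, hsγ⟩ : ∃ s, τ - 1 < s ∧ s < (1 - γ) / α :=
    exists_between (by rw [lt_div_iff₀ hα]; linarith)
  have hθ : γ < 1 - α * s := by rw [lt_div_iff₀ hα] at hsγ; linarith
  have hG : Antitone fun x : ℝ => (ℙ : Measure Ω).real {ω | x < (D ω : ℝ)} :=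
    fun x y hxy => measureReal_mono fun ω (h : y < _) => hxy.trans_lt h
  obtain ⟨c, hc, hcG⟩ :=
    exists_mul_rpow_neg_le_sub_half hℓ hpow hG (by linarith [hτ.1]) hβs
  have hbound : Tendsto (fun n : ℕ => ENNReal.ofReal (4 / (c * (n : ℝ) ^ (1 - α * s))))
      atTop (nhds 0) := by
    simpa using ENNReal.tendsto_ofReal <| tendsto_const_nhds.div_atTop <|
      ((tendsto_rpow_atTop (by linarith)).comp tendsto_natCast_atTop_atTop).const_mul_atTop hc
  refine tendsto_measure_one_of_tendsto_measure_compl <|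
    tendsto_of_tendsto_of_tendsto_of_le_of_le' tendsto_const_nhds hbound
      (.of_forall fun _ => zero_le) ?_
  filter_upwards [eventually_ge_atTop 1, hεlim.eventually (eventually_le_nhds one_half_pos),
    ((tendsto_rpow_atTop hα).comp tendsto_natCast_atTop_atTop).eventually hcG,
    tendsto_natCast_atTop_atTop.eventually (eventually_mul_rpow_le_mul_rpow (a := 2) hc hθ)]
    with n hn hε hcGn hγθ
  have hn0 : (0 : ℝ) < n := by exact_mod_cast hn
  simp only [Set.compl_ofPred, not_le]
  refine measure_card_filter_lt_le_of_isConditionedLE (hD'meas n) (hD'indep n) (hD'dist n)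
    (by nlinarith [Real.rpow_nonneg hn0.le α]) (by positivity) ?_ hγθ
  calc c * (n : ℝ) ^ (1 - α * s) = n * (c * ((n : ℝ) ^ α) ^ (-s)) := by
        rw [← Real.rpow_mul hn0.le, sub_eq_add_neg, Real.rpow_add hn0, Real.rpow_one, mul_neg]
        ring
    _ ≤ _ := by gcongr; exact hcGn

/-- With `D` power-law with exponent `τ ∈ (1,2)` and slowly varying `ℓ`,
`0 < α < 1/(τ-1)`, `ε_n > 0` with `ε_n → 0`, and `D' n i` (for `i < n`) i.i.d. copies of `D`
conditioned to be at most `n^α`, for every `0 < γ < 1 - α(τ-1)`,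
`P(#{i < n : D' n i > ε_n n^α} ≥ n^γ) → 1` as `n → ∞`; that is, with high probability the
number of giant-degree vertices in the conditioned model is at least `n^γ`. -/
theorem stmt13
    {Ω : Type*} [MeasureSpace Ω] [IsProbabilityMeasure (ℙ : Measure Ω)]
    (D : Ω → ℕ) (hDmeas : Measurable D) (hDpos : ∀ ω, 1 ≤ D ω)
    (τ : ℝ) (hτ : τ ∈ Set.Ioo (1 : ℝ) 2)
    (ℓ : ℝ → ℝ) (hℓ : SlowlyVarying ℓ)
    (hpow : ∀ x ≥ (1 : ℝ), (ℙ {ω | x < (D ω : ℝ)}).toReal = ℓ x * x ^ (-(τ - 1)))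
    (α : ℝ) (hα : 0 < α) (hα' : α < 1 / (τ - 1))
    (εseq : ℕ → ℝ) (hεpos : ∀ n, 0 < εseq n) (hεlim : Tendsto εseq atTop (nhds 0))
    (D' : ℕ → ℕ → Ω → ℕ) (hD'meas : ∀ n i, Measurable (D' n i))
    (hD'indep : ∀ n, iIndepFun (fun i : Fin n => D' n i) ℙ)
    (hD'dist : ∀ n, ∀ i < n, ∀ j : ℕ,
      ℙ {ω | D' n i ω = j}
        = if 1 ≤ j ∧ (j : ℝ) ≤ (n : ℝ) ^ α then
            ℙ {ω | D ω = j} / ℙ {ω | (D ω : ℝ) ≤ (n : ℝ) ^ α}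
          else 0) :
    ∀ γ : ℝ, 0 < γ → γ < 1 - α * (τ - 1) →
      Tendsto
        (fun n : ℕ =>
          ℙ {ω | (n : ℝ) ^ γ ≤
              (((Finset.range n).filter
                (fun i => εseq n * (n : ℝ) ^ α < (D' n i ω : ℝ))).card : ℝ)})
        atTop (nhds 1) :=
  stmt13_general D τ hτ ℓ hℓ hpow α hα εseq hεlim D' hD'meas hD'indep hD'dist
end
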